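/- Let F be a marked set over a weakly noetherian reduction structure 𝒥 with disjoint cones, and let g ∈ P. Then there is exactly one polynomial l with supp(l) ⊆ N(J) and g − l ∈ ⟨τF⟩ (the canonical form of g); moreover g − l has a unique representation by τF, i.e. a unique expression g − l = Σ_{i=1}^r c_i x^{η_i} f_{α_i} with c_i ∈ A nonzero and the x^{η_i} f_{α_i} distinct elements of τF. -/

import Mathlib

open MvPolynomial

/-- Terms (monomials) in `n` variables, identified with their exponent vectors. -/
abbrev Term (n : ℕ) := Fin n →₀ ℕ

/-- A reduction structure `𝒥 = (M, λ, τ)`. -/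
structure RedStruct (n : ℕ) where
  M : Finset (Term n)
  tau : Term n → Set (Term n)
  lam : Term n → Finset (Term n)
  tau_orderIdeal : ∀ α ∈ M, ∀ η ∈ tau α, ∀ η' : Term n, η' ≤ η → η' ∈ tau α
  cover : ∀ β : Term n, (∃ α ∈ M, ∃ η, β = α + η) ↔ (∃ α ∈ M, ∃ η ∈ tau α, β = α + η)
  lam_tail : ∀ α ∈ M, ∀ γ ∈ lam α, ¬ ∃ η ∈ tau α, γ = α + η

namespace RedStruct

variable {n : ℕ}

/-- The cone of `x^α`. -/
def cone (𝒥 : RedStruct n) (α : Term n) : Set (Term n) := {β | ∃ η ∈ 𝒥.tau α, β = α + η}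

/-- The semigroup ideal `J` generated by `M`. -/
def idealJ (𝒥 : RedStruct n) : Set (Term n) := {β | ∃ α ∈ 𝒥.M, ∃ η, β = α + η}

def hasMaximalCones (𝒥 : RedStruct n) : Prop := ∀ α ∈ 𝒥.M, 𝒥.tau α = Set.univ

def hasDisjointCones (𝒥 : RedStruct n) : Prop :=
  ∀ α ∈ 𝒥.M, ∀ α' ∈ 𝒥.M, α ≠ α' → 𝒥.cone α ∩ 𝒥.cone α' = ∅

/-- `𝒥'` is a substructure of `𝒥`: same `M`, same tails, smaller multiplicative sets. -/
def IsSubstructure (𝒥' 𝒥 : RedStruct n) : Prop :=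
  𝒥'.M = 𝒥.M ∧ 𝒥'.lam = 𝒥.lam ∧ ∀ α ∈ 𝒥.M, 𝒥'.tau α ⊆ 𝒥.tau α

/-- An ordered reduction structure: there are a well-founded strictly (partially) ordered set
`(W, ≺)` and an ordering function `φ` with `φ(x^{γ+η}) ≺ φ(x^{α+η})` for all `x^α ∈ M`,
`x^γ ∈ λ_α`, `x^η ∈ τ_α`. -/
def IsOrdered (𝒥 : RedStruct n) : Prop :=
  ∃ (W : Type) (lt : W → W → Prop) (φ : Term n → W),
    IsStrictOrder W lt ∧ WellFounded lt ∧
      ∀ α ∈ 𝒥.M, ∀ γ ∈ 𝒥.lam α, ∀ η ∈ 𝒥.tau α, lt (φ (γ + η)) (φ (α + η))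

end RedStruct

variable {n : ℕ}

/-- A marked set on `𝒥` over the ring `A`: each `f_α = x^α + Σ_{γ ∈ λ_α} c γ x^γ`. -/
def IsMarkedSet {A : Type*} [CommRing A] (𝒥 : RedStruct n)
    (F : Term n → MvPolynomial (Fin n) A) : Prop :=
  ∀ α ∈ 𝒥.M, MvPolynomial.coeff α (F α) = 1 ∧
    ∀ β : Term n, MvPolynomial.coeff β (F α) ≠ 0 → β = α ∨ β ∈ 𝒥.lam α

/-- One base step of reduction, allowing multipliers from the family `σ`. -/
def RedStep {A : Type*} [CommRing A] (𝒥 : RedStruct n) (σ : Term n → Set (Term n))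
    (F : Term n → MvPolynomial (Fin n) A) (g h : MvPolynomial (Fin n) A) : Prop :=
  ∃ α ∈ 𝒥.M, ∃ η ∈ σ α, MvPolynomial.coeff (α + η) g ≠ 0 ∧
    h = g - MvPolynomial.monomial η (MvPolynomial.coeff (α + η) g) * F α

/-- The reduction relation `→_{F𝒥}`. -/
def Red {A : Type*} [CommRing A] (𝒥 : RedStruct n) (F : Term n → MvPolynomial (Fin n) A) :
    MvPolynomial (Fin n) A → MvPolynomial (Fin n) A → Prop :=
  RedStep 𝒥 𝒥.tau F

/-- The reflexive-transitive closure `→_*` of `→_{F𝒥}`. -/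
def RedStar {A : Type*} [CommRing A] (𝒥 : RedStruct n) (F : Term n → MvPolynomial (Fin n) A) :
    MvPolynomial (Fin n) A → MvPolynomial (Fin n) A → Prop :=
  Relation.ReflTransGen (Red 𝒥 F)

/-- A polynomial is reduced if its support is contained in `N(J)`. -/
def IsReducedPoly {A : Type*} [CommRing A] (𝒥 : RedStruct n)
    (l : MvPolynomial (Fin n) A) : Prop :=
  ∀ β ∈ l.support, β ∉ 𝒥.idealJ

/-- A relation is noetherian: there is no infinite chain of steps. -/
def RelNoetherian {X : Type*} (r : X → X → Prop) : Prop :=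
  ¬ ∃ f : ℕ → X, ∀ i, r (f i) (f (i + 1))

/-- `𝒥` is noetherian over `A`: for every marked set `F` on `𝒥` over `A`, every sequence
of `→_{F𝒥}` reduction steps terminates. -/
def RedStruct.IsNoetherianOver (𝒥 : RedStruct n) (A : Type*) [CommRing A] : Prop :=
  ∀ F : Term n → MvPolynomial (Fin n) A, IsMarkedSet 𝒥 F → RelNoetherian (Red 𝒥 F)

/-- `𝒥` is weakly noetherian over `A`: it has a noetherian substructure. -/
def RedStruct.IsWeaklyNoetherianOver (𝒥 : RedStruct n) (A : Type*) [CommRing A] : Prop :=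
  ∃ 𝒥' : RedStruct n, RedStruct.IsSubstructure 𝒥' 𝒥 ∧ 𝒥'.IsNoetherianOver A

/-- The set `σF = {x^η f_α : x^α ∈ M, x^η ∈ σ_α}`. -/
def tauF {A : Type*} [CommRing A] (𝒥 : RedStruct n) (σ : Term n → Set (Term n))
    (F : Term n → MvPolynomial (Fin n) A) : Set (MvPolynomial (Fin n) A) :=
  {p | ∃ α ∈ 𝒥.M, ∃ η ∈ σ α, p = MvPolynomial.monomial η (1 : A) * F α}

/-- The `A`-submodule `⟨σF⟩` generated by `σF`. -/
noncomputable def tauSpan {A : Type*} [CommRing A] (𝒥 : RedStruct n) (σ : Term n → Set (Term n))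
    (F : Term n → MvPolynomial (Fin n) A) : Submodule A (MvPolynomial (Fin n) A) :=
  Submodule.span A (tauF 𝒥 σ F)

/-- The `A`-submodule `⟨N(J)⟩` spanned by the terms outside `J`. -/
noncomputable def NJSpan (𝒥 : RedStruct n) (A : Type*) [CommRing A] :
    Submodule A (MvPolynomial (Fin n) A) :=
  Submodule.span A {p | ∃ β ∉ 𝒥.idealJ, p = MvPolynomial.monomial β (1 : A)}

/-- `F` is a marked basis: `(F) ⊕ ⟨N(J)⟩ = P` as `A`-modules. -/
def IsMarkedBasis {A : Type*} [CommRing A] (𝒥 : RedStruct n)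
    (F : Term n → MvPolynomial (Fin n) A) : Prop :=
  IsCompl (Submodule.restrictScalars A (Ideal.span (F '' ↑𝒥.M))) (NJSpan 𝒥 A)

/-- A representation of `g` by `σF`: `g = Σ c_(α,η) · x^η f_α` over finitely many
distinct pairs `(α, η)` with `x^α ∈ M`, `x^η ∈ σ_α` and nonzero coefficients. -/
def IsRepr {A : Type*} [CommRing A] (𝒥 : RedStruct n) (σ : Term n → Set (Term n))
    (F : Term n → MvPolynomial (Fin n) A) (c : (Term n × Term n) →₀ A)
    (g : MvPolynomial (Fin n) A) : Prop :=
  (∀ p ∈ c.support, p.1 ∈ 𝒥.M ∧ p.2 ∈ σ p.1) ∧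
    g = c.sum fun p a => MvPolynomial.monomial p.2 a * F p.1

/-- The S-polynomial `S(f_β, f_α) = (lcm(x^α,x^β)/x^α) f_α − (lcm(x^α,x^β)/x^β) f_β`,
written `SPoly F α β`. -/
noncomputable def SPoly {A : Type*} [CommRing A] (F : Term n → MvPolynomial (Fin n) A) (α β : Term n) :
    MvPolynomial (Fin n) A :=
  MvPolynomial.monomial ((α ⊔ β) - α) (1 : A) * F α -
    MvPolynomial.monomial ((α ⊔ β) - β) (1 : A) * F β

/-
A reduction step at a term of `J` only sees the coefficient of that term, and by disjointness of
the cones every term of `J` is the head `x^{α+η}` of exactly one `x^η f_α ∈ τF`. Termination, which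
passes from the noetherian substructure to `𝒥` because disjoint cones force `τ'_α = τ_α`, gives a
canonical form. For uniqueness, suppose `h = Σ c_p x^{η_p} f_{α_p}` with some `c_p ≠ 0` has no term
in `J`. Then one can choose `x` whose head coefficients make
`x → x - c_{p₁} x^{η_{p₁}} f_{α_{p₁}} → ⋯ → x - h` a chain of reductions, and since subtracting `h`
does not touch the head coefficients, the chain repeats from `x - h` to `x - 2h` and so on forever.
-/

namespace RelNoetherian

variable {X : Type*} {r : X → X → Prop}

theorem wellFounded_swap (h : RelNoetherian r) : WellFounded (Function.swap r) :=
  wellFounded_iff_isEmpty_descending_chain.2 ⟨fun ⟨f, hf⟩ => h ⟨f, hf⟩⟩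

theorem not_forall_transGen (h : RelNoetherian r) (f : ℕ → X) :
    ¬ ∀ k, Relation.TransGen r (f k) (f (k + 1)) := fun hf =>
  (wellFounded_iff_isEmpty_descending_chain.1 h.wellFounded_swap.transGen).false
    ⟨f, fun k => Relation.transGen_swap.2 (hf k)⟩

end RelNoetherian

namespace RedStruct

def multPairs (𝒥 : RedStruct n) : Set (Term n × Term n) := {p | p.1 ∈ 𝒥.M ∧ p.2 ∈ 𝒥.tau p.1}

variable {𝒥 𝒥' : RedStruct n}

theorem hasDisjointCones.eq_of_add_eq (hd : 𝒥.hasDisjointCones) {α α' η η' : Term n}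
    (hα : α ∈ 𝒥.M) (hη : η ∈ 𝒥.tau α) (hα' : α' ∈ 𝒥.M) (hη' : η' ∈ 𝒥.tau α')
    (h : α + η = α' + η') : α = α' ∧ η = η' := by
  obtain rfl : α = α' := by
    by_contra hne
    have hmem : α + η ∈ 𝒥.cone α ∩ 𝒥.cone α' := ⟨⟨η, hη, rfl⟩, ⟨η', hη', h⟩⟩
    rwa [hd α hα α' hα' hne] at hmem
  exact ⟨rfl, add_left_cancel h⟩

theorem hasDisjointCones.injOn_add (hd : 𝒥.hasDisjointCones) :
    Set.InjOn (fun p : Term n × Term n => p.1 + p.2) 𝒥.multPairs :=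
  fun _ hp _ hq h => Prod.ext_iff.2 (hd.eq_of_add_eq hp.1 hp.2 hq.1 hq.2 h)

theorem IsSubstructure.tau_eq (hsub : 𝒥'.IsSubstructure 𝒥) (hd : 𝒥.hasDisjointCones)
    {α : Term n} (hα : α ∈ 𝒥.M) : 𝒥'.tau α = 𝒥.tau α := by
  refine (hsub.2.2 α hα).antisymm fun η hη => ?_
  obtain ⟨α', hα', η', hη', h⟩ := (𝒥'.cover (α + η)).1 ⟨α, hsub.1 ▸ hα, η, rfl⟩
  have hα'M : α' ∈ 𝒥.M := hsub.1 ▸ hα'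
  obtain ⟨rfl, rfl⟩ := hd.eq_of_add_eq hα hη hα'M (hsub.2.2 α' hα'M hη') h
  exact hη'

end RedStruct

variable {A : Type*} [CommRing A] {𝒥 𝒥' : RedStruct n} {F : Term n → MvPolynomial (Fin n) A}
  {g h l : MvPolynomial (Fin n) A}

theorem IsMarkedSet.of_isSubstructure (hsub : 𝒥'.IsSubstructure 𝒥) (hF : IsMarkedSet 𝒥 F) :
    IsMarkedSet 𝒥' F := by
  intro α hα
  rw [hsub.1] at hα
  rw [hsub.2.1]
  exact hF α hα

theorem Red.of_isSubstructure (hsub : 𝒥'.IsSubstructure 𝒥) (hd : 𝒥.hasDisjointCones)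
    (hgh : Red 𝒥 F g h) : Red 𝒥' F g h := by
  obtain ⟨α, hα, η, hη, hc, rfl⟩ := hgh
  exact ⟨α, hsub.1 ▸ hα, η, (hsub.tau_eq hd hα).symm ▸ hη, hc, rfl⟩

theorem RedStruct.IsWeaklyNoetherianOver.relNoetherian_red (hwn : 𝒥.IsWeaklyNoetherianOver A)
    (hd : 𝒥.hasDisjointCones) (hF : IsMarkedSet 𝒥 F) : RelNoetherian (Red 𝒥 F) := by
  obtain ⟨𝒥', hsub, hn'⟩ := hwn
  rintro ⟨f, hf⟩
  exact hn' F (hF.of_isSubstructure hsub) ⟨f, fun i => (hf i).of_isSubstructure hsub hd⟩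

theorem IsReducedPoly.coeff_eq_zero (hl : IsReducedPoly 𝒥 l) {β : Term n} (hβ : β ∈ 𝒥.idealJ) :
    coeff β l = 0 :=
  notMem_support_iff.1 fun hmem => hl β hmem hβ

theorem isReducedPoly_iff : IsReducedPoly 𝒥 l ↔ ∀ β ∈ 𝒥.idealJ, coeff β l = 0 :=
  ⟨fun hl _ hβ => hl.coeff_eq_zero hβ, fun hl β hmem hβ => mem_support_iff.1 hmem (hl β hβ)⟩

theorem IsReducedPoly.sub (hg : IsReducedPoly 𝒥 g) (hl : IsReducedPoly 𝒥 l) :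
    IsReducedPoly 𝒥 (g - l) :=
  isReducedPoly_iff.2 fun β hβ => by
    rw [coeff_sub, hg.coeff_eq_zero hβ, hl.coeff_eq_zero hβ, sub_zero]

noncomputable def multTerm (F : Term n → MvPolynomial (Fin n) A) (p : Term n × Term n) :
    MvPolynomial (Fin n) A :=
  monomial p.2 1 * F p.1

theorem smul_multTerm (a : A) (p : Term n × Term n) :
    a • multTerm F p = monomial p.2 a * F p.1 := by
  rw [multTerm, ← smul_mul_assoc, smul_monomial, smul_eq_mul, mul_one]

theorem tauF_eq_image : tauF 𝒥 𝒥.tau F = multTerm F '' 𝒥.multPairs := by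
  ext x
  constructor
  · rintro ⟨α, hα, η, hη, rfl⟩
    exact ⟨(α, η), ⟨hα, hη⟩, rfl⟩
  · rintro ⟨p, ⟨hα, hη⟩, rfl⟩
    exact ⟨p.1, hα, p.2, hη, rfl⟩

theorem isRepr_iff {c : (Term n × Term n) →₀ A} :
    IsRepr 𝒥 𝒥.tau F c g ↔
      c ∈ Finsupp.supported A A 𝒥.multPairs ∧ Finsupp.linearCombination A (multTerm F) c = g := by
  simp only [IsRepr, Finsupp.mem_supported, Set.subset_def, Finset.mem_coe,
    Finsupp.linearCombination_apply, smul_multTerm, eq_comm (a := g)]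
  rfl

theorem mem_tauSpan_iff : g ∈ tauSpan 𝒥 𝒥.tau F ↔ ∃ c, IsRepr 𝒥 𝒥.tau F c g := by
  simp only [tauSpan, tauF_eq_image, Finsupp.mem_span_image_iff_linearCombination, isRepr_iff]

theorem Red.sub_mem_tauSpan (hgh : Red 𝒥 F g h) : g - h ∈ tauSpan 𝒥 𝒥.tau F := by
  obtain ⟨α, hα, η, hη, -, rfl⟩ := hgh
  rw [sub_sub_cancel, ← smul_multTerm (F := F) _ (α, η), tauSpan, tauF_eq_image]
  exact Submodule.smul_mem _ _ (Submodule.subset_span ⟨(α, η), ⟨hα, hη⟩, rfl⟩)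

theorem RedStar.sub_mem_tauSpan (hgh : RedStar 𝒥 F g h) : g - h ∈ tauSpan 𝒥 𝒥.tau F := by
  induction hgh with
  | refl => rw [sub_self]; exact Submodule.zero_mem _
  | tail _ hstep ih => rw [← sub_add_sub_cancel]; exact Submodule.add_mem _ ih hstep.sub_mem_tauSpan

theorem exists_red_of_not_isReducedPoly (hg : ¬ IsReducedPoly 𝒥 g) : ∃ h, Red 𝒥 F g h := by
  simp only [IsReducedPoly, not_forall, not_not] at hg
  obtain ⟨β, hβ, hJ⟩ := hg
  obtain ⟨α, hα, η, hη, rfl⟩ := (𝒥.cover β).1 hJ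
  exact ⟨_, α, hα, η, hη, mem_support_iff.1 hβ, rfl⟩

theorem exists_redStar_isReducedPoly (hne : RelNoetherian (Red 𝒥 F))
    (g : MvPolynomial (Fin n) A) : ∃ l, RedStar 𝒥 F g l ∧ IsReducedPoly 𝒥 l := by
  induction g using hne.wellFounded_swap.induction with
  | _ g ih =>
    by_cases hg : IsReducedPoly 𝒥 g
    · exact ⟨g, Relation.ReflTransGen.refl, hg⟩
    obtain ⟨h, hgh⟩ := exists_red_of_not_isReducedPoly (F := F) hg
    obtain ⟨l, hhl, hl⟩ := ih h hgh
    exact ⟨l, Relation.ReflTransGen.head hgh hhl, hl⟩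

theorem exists_transGen_red_sub_sum {s : Finset (Term n × Term n)} (hs : s.Nonempty)
    (hsJ : ↑s ⊆ 𝒥.multPairs) (hinj : Set.InjOn (fun p : Term n × Term n => p.1 + p.2) s)
    (a : Term n × Term n → A) (ha : ∀ p ∈ s, a p ≠ 0) :
    ∃ x, ∀ z, (∀ p ∈ s, coeff (p.1 + p.2) z = 0) →
      Relation.TransGen (Red 𝒥 F) (x + z) (x + z - ∑ p ∈ s, a p • multTerm F p) := by
  induction hs using Finset.Nonempty.cons_induction with
  | singleton p =>
    refine ⟨monomial (p.1 + p.2) (a p), fun z hz => Relation.TransGen.single ?_⟩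
    have hcoeff : coeff (p.1 + p.2) (monomial (p.1 + p.2) (a p) + z) = a p := by
      rw [coeff_add, coeff_monomial, if_pos rfl, hz p (Finset.mem_singleton_self p), add_zero]
    have hp := hsJ (Finset.mem_singleton_self p)
    refine ⟨p.1, hp.1, p.2, hp.2, by rw [hcoeff]; exact ha p (Finset.mem_singleton_self p), ?_⟩
    rw [hcoeff, Finset.sum_singleton, smul_multTerm]
  | cons p s hps hs ih =>
    simp only [Finset.coe_cons, Set.insert_subset_iff, Set.injOn_insert (Finset.mem_coe.not.2 hps),
      Finset.mem_cons, forall_eq_or_imp] at hsJ hinj ha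
    obtain ⟨y, hy⟩ := ih hsJ.2 hinj.1 ha.2
    -- `x - a_p x^η f_α` differs from `y` only at the head of `p`, which is not a head of `s`
    set x₀ := y + a p • multTerm F p with hx₀
    set d := a p - coeff (p.1 + p.2) x₀
    refine ⟨x₀ + monomial (p.1 + p.2) d, fun z hz => ?_⟩
    rw [Finset.forall_mem_cons] at hz
    have hcoeff : coeff (p.1 + p.2) (x₀ + monomial (p.1 + p.2) d + z) = a p := by
      rw [coeff_add, coeff_add, coeff_monomial, if_pos rfl, hz.1, add_zero, add_sub_cancel]
    have hstep : Red 𝒥 F (x₀ + monomial (p.1 + p.2) d + z) (y + (monomial (p.1 + p.2) d + z)) := by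
      refine ⟨p.1, hsJ.1.1, p.2, hsJ.1.2, by rw [hcoeff]; exact ha.1, ?_⟩
      rw [hcoeff, ← smul_multTerm, hx₀]
      abel
    have hrest := hy (monomial (p.1 + p.2) d + z) fun q hq => by
      rw [coeff_add, coeff_monomial, if_neg fun h => hinj.2 ⟨q, hq, h.symm⟩, hz.2 q hq, zero_add]
    refine Relation.TransGen.head hstep ?_
    convert hrest using 1
    rw [Finset.sum_cons, hx₀]
    abel

theorem eq_zero_of_isReducedPoly_linearCombination (hd : 𝒥.hasDisjointCones)
    (hne : RelNoetherian (Red 𝒥 F)) {c : (Term n × Term n) →₀ A}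
    (hc : c ∈ Finsupp.supported A A 𝒥.multPairs)
    (hred : IsReducedPoly 𝒥 (Finsupp.linearCombination A (multTerm F) c)) : c = 0 := by
  by_contra hc0
  set h := Finsupp.linearCombination A (multTerm F) c
  obtain ⟨x, hx⟩ := exists_transGen_red_sub_sum (F := F) (Finsupp.support_nonempty_iff.2 hc0)
    ((Finsupp.mem_supported A c).1 hc) (hd.injOn_add.mono ((Finsupp.mem_supported A c).1 hc)) c
    fun p hp => Finsupp.mem_support_iff.1 hp
  refine hne.not_forall_transGen (fun k => x - k • h) fun k => ?_
  have hz : ∀ p ∈ c.support, coeff (p.1 + p.2) (-(k • h)) = 0 := fun p _ => by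
    rw [coeff_neg, coeff_smul, hred.coeff_eq_zero ⟨p.1, ((Finsupp.mem_supported A c).1 hc ‹_›).1,
      p.2, rfl⟩, smul_zero, neg_zero]
  convert hx (-(k • h)) hz using 1
  · rw [sub_eq_add_neg]
  · have hsum : h = ∑ p ∈ c.support, c p • multTerm F p := Finsupp.linearCombination_apply A c
    rw [← hsum, add_smul, one_smul]
    abel

theorem eq_zero_of_mem_tauSpan_of_isReducedPoly (hd : 𝒥.hasDisjointCones)
    (hne : RelNoetherian (Red 𝒥 F)) (hmem : g ∈ tauSpan 𝒥 𝒥.tau F) (hg : IsReducedPoly 𝒥 g) :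
    g = 0 := by
  obtain ⟨c, hrepr⟩ := mem_tauSpan_iff.1 hmem
  obtain ⟨hc, rfl⟩ := isRepr_iff.1 hrepr
  rw [eq_zero_of_isReducedPoly_linearCombination hd hne hc hg, map_zero]

theorem IsRepr.unique (hd : 𝒥.hasDisjointCones) (hne : RelNoetherian (Red 𝒥 F))
    {c c' : (Term n × Term n) →₀ A} (hc : IsRepr 𝒥 𝒥.tau F c g)
    (hc' : IsRepr 𝒥 𝒥.tau F c' g) : c = c' := by
  rw [isRepr_iff] at hc hc'
  refine sub_eq_zero.1 (eq_zero_of_isReducedPoly_linearCombination hd hne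
    (Submodule.sub_mem _ hc.1 hc'.1) ?_)
  rw [map_sub, hc.2, hc'.2, sub_self]
  exact fun β hβ => absurd hβ (by simp)

/-- over a weakly noetherian RS with disjoint cones, every `g` has a unique
canonical form `l` with `supp(l) ⊆ N(J)` and `g − l ∈ ⟨τF⟩`, and `g − l` has a unique
representation by `τF`. -/
theorem stmt4 {n : ℕ} {A : Type} [CommRing A] (𝒥 : RedStruct n)
    (hwn : 𝒥.IsWeaklyNoetherianOver A) (hd : 𝒥.hasDisjointCones)
    (F : Term n → MvPolynomial (Fin n) A) (hF : IsMarkedSet 𝒥 F)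
    (g : MvPolynomial (Fin n) A) :
    (∃! l : MvPolynomial (Fin n) A, IsReducedPoly 𝒥 l ∧ g - l ∈ tauSpan 𝒥 𝒥.tau F) ∧
      ∀ l : MvPolynomial (Fin n) A, IsReducedPoly 𝒥 l → g - l ∈ tauSpan 𝒥 𝒥.tau F →
        ∃! c : (Term n × Term n) →₀ A, IsRepr 𝒥 𝒥.tau F c (g - l) := by
  have hne := hwn.relNoetherian_red hd hF
  refine ⟨?_, fun l _ hl => ?_⟩
  · obtain ⟨l, hgl, hl⟩ := exists_redStar_isReducedPoly hne g
    refine ⟨l, ⟨hl, hgl.sub_mem_tauSpan⟩, fun l' ⟨hl', hgl'⟩ => ?_⟩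
    have hdiff : l - l' ∈ tauSpan 𝒥 𝒥.tau F := by
      simpa using Submodule.sub_mem _ hgl' hgl.sub_mem_tauSpan
    exact (sub_eq_zero.1 (eq_zero_of_mem_tauSpan_of_isReducedPoly hd hne hdiff (hl.sub hl'))).symm
  · obtain ⟨c, hc⟩ := mem_tauSpan_iff.1 hl
    exact ⟨c, hc, fun c' hc' => hc'.unique hd hne hc⟩
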